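/- arXiv:math/0109162 — 2 statements merged into one kernel-verified Lean document; each statement's English description precedes it below -/
import Mathlib

section
/- Let V be a real inner product space of finite dimension n−2 and let A be a symmetric bilinear form on V. Then the bracket on the vector space V ⊕ V* ⊕ ℝe₊ ⊕ ℝe₋ defined by [e₋, v] = v♭, [e₋, α] = A(α♯), [α, v] = A(v, α♯)·e₊ for v ∈ V, α ∈ V* (all other brackets of basis elements zero, extended bilinearly and antisymmetrically) satisfies the Jacobi identity, and hence defines a Lie algebra structure 𝔤_A on V ⊕ V* ⊕ ℝe₊ ⊕ ℝe₋. -/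
open scoped RealInnerProductSpace

noncomputable section

variable {V : Type*} [NormedAddCommGroup V] [InnerProductSpace ℝ V] [FiniteDimensional ℝ V]

/-- The musical isomorphism `♭ : V → V*` induced by the inner product. -/
def flat (v : V) : Module.Dual ℝ V :=
  ((InnerProductSpace.toDual ℝ V) v).toLinearMap

/-- The musical isomorphism `♯ : V* → V` induced by the inner product. -/
def sharp (α : Module.Dual ℝ V) : V :=
  (InnerProductSpace.toDual ℝ V).symm (LinearMap.toContinuousLinearMap α)

/-- The underlying vector space `V ⊕ V* ⊕ ℝe₊ ⊕ ℝe₋` of the Cahen--Wallach Lie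
algebra `𝔤_A`; an element `(v, α, a, b)` stands for `v + α + a•e₊ + b•e₋`. -/
abbrev CW (V : Type*) [NormedAddCommGroup V] [InnerProductSpace ℝ V]
    [FiniteDimensional ℝ V] :=
  V × Module.Dual ℝ V × ℝ × ℝ

/-- The basis element `e₊` of `𝔤_A`. -/
def ePlus : CW V := (0, 0, 1, 0)

/-- The basis element `e₋` of `𝔤_A`. -/
def eMinus : CW V := (0, 0, 0, 1)

/-- The Cahen--Wallach bracket on `V ⊕ V* ⊕ ℝe₊ ⊕ ℝe₋` determined (by bilinearity
and antisymmetry) by `[e₋, v] = v♭`, `[e₋, α] = A(α♯)` (the symmetric endomorphism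
`v ↦ (A v)♯` applied to `α♯`) and `[α, v] = A(v, α♯)·e₊`, all other brackets zero. -/
def cwBracket (A : LinearMap.BilinForm ℝ V) (x y : CW V) : CW V :=
  (x.2.2.2 • sharp (A (sharp y.2.1)) - y.2.2.2 • sharp (A (sharp x.2.1)),
   x.2.2.2 • flat y.1 - y.2.2.2 • flat x.1,
   A y.1 (sharp x.2.1) - A x.1 (sharp y.2.1),
   0)

/-!
All four axioms are checked componentwise, using that `♭` and `♯` are mutually inverse
linear maps. In the Jacobi identity the `V` and `V*` components cancel cyclically, and
the `e₊` component cancels because `A` and `(u, w) ↦ A((A u)♯, w)` are both symmetric.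
-/

section Musical

lemma flat_add (v w : V) : flat (v + w) = flat v + flat w := by
  ext; simp [flat]

lemma flat_smul (r : ℝ) (v : V) : flat (r • v) = r • flat v := by
  ext; simp [flat]

lemma sharp_add (α β : Module.Dual ℝ V) : sharp (α + β) = sharp α + sharp β := by
  simp [sharp]

lemma sharp_smul (r : ℝ) (α : Module.Dual ℝ V) : sharp (r • α) = r • sharp α := by
  simp [sharp]

lemma flat_sub (v w : V) : flat (v - w) = flat v - flat w := by
  ext; simp [flat]

lemma sharp_sub (α β : Module.Dual ℝ V) : sharp (α - β) = sharp α - sharp β := by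
  simp [sharp]

lemma sharp_flat (v : V) : sharp (flat v) = v :=
  (InnerProductSpace.toDual ℝ V).symm_apply_apply v

lemma flat_sharp (α : Module.Dual ℝ V) : flat (sharp α) = α := by
  ext; simp [sharp, flat]

lemma apply_eq_inner_sharp (α : Module.Dual ℝ V) (w : V) : α w = ⟪sharp α, w⟫ := by
  conv_lhs => rw [← flat_sharp α]
  rfl

lemma apply_sharp_comm (α β : Module.Dual ℝ V) : α (sharp β) = β (sharp α) := by
  rw [apply_eq_inner_sharp α, apply_eq_inner_sharp β, real_inner_comm]

end Musical

lemma LinearMap.BilinForm.IsSymm.apply_sharp_apply_comm {A : LinearMap.BilinForm ℝ V}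
    (hA : A.IsSymm) (u w : V) : A (sharp (A u)) w = A (sharp (A w)) u := by
  calc A (sharp (A u)) w = A w (sharp (A u)) := hA.eq _ _
    _ = A u (sharp (A w)) := apply_sharp_comm _ _
    _ = A (sharp (A w)) u := hA.eq _ _

section Bracket

variable (A : LinearMap.BilinForm ℝ V)

lemma cwBracket_add_left (x y z : CW V) :
    cwBracket A (x + y) z = cwBracket A x z + cwBracket A y z := by
  simp only [cwBracket, Prod.fst_add, Prod.snd_add, Prod.mk_add_mk, Prod.mk.injEq,
    sharp_add, flat_add, map_add, LinearMap.add_apply]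
  refine ⟨by module, by module, by ring, by simp⟩

lemma cwBracket_smul_left (r : ℝ) (x y : CW V) :
    cwBracket A (r • x) y = r • cwBracket A x y := by
  simp only [cwBracket, Prod.smul_fst, Prod.smul_snd, Prod.smul_mk, Prod.mk.injEq,
    sharp_smul, flat_smul, map_smul, LinearMap.smul_apply, smul_eq_mul]
  refine ⟨by module, by module, by ring, by simp⟩

lemma cwBracket_swap (x y : CW V) : cwBracket A x y = -cwBracket A y x := by
  simp only [cwBracket, Prod.neg_mk, neg_sub, neg_zero]

lemma cwBracket_add_right (x y z : CW V) :
    cwBracket A x (y + z) = cwBracket A x y + cwBracket A x z := by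
  rw [cwBracket_swap, cwBracket_add_left, neg_add, ← cwBracket_swap, ← cwBracket_swap]

lemma cwBracket_smul_right (r : ℝ) (x y : CW V) :
    cwBracket A x (r • y) = r • cwBracket A x y := by
  rw [cwBracket_swap, cwBracket_smul_left, cwBracket_swap A x y]
  exact (smul_neg r _).symm

lemma cwBracket_jacobi {A : LinearMap.BilinForm ℝ V} (hA : A.IsSymm) (x y z : CW V) :
    cwBracket A x (cwBracket A y z) + cwBracket A y (cwBracket A z x) +
      cwBracket A z (cwBracket A x y) = 0 := by
  obtain ⟨v₁, α₁, -, b₁⟩ := x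
  obtain ⟨v₂, α₂, -, b₂⟩ := y
  obtain ⟨v₃, α₃, -, b₃⟩ := z
  simp only [cwBracket, Prod.mk_add_mk, Prod.mk_eq_zero, sharp_sub, sharp_smul, sharp_flat,
    flat_sub, flat_smul, flat_sharp, map_sub, map_smul, LinearMap.sub_apply,
    LinearMap.smul_apply, smul_sub, smul_smul, smul_eq_mul]
  refine ⟨by module, by module, ?_, by simp⟩
  linear_combination
    b₂ * hA.apply_sharp_apply_comm (sharp α₃) (sharp α₁) +
    b₃ * hA.apply_sharp_apply_comm (sharp α₁) (sharp α₂) +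
    b₁ * hA.apply_sharp_apply_comm (sharp α₂) (sharp α₃) +
    b₂ * hA.eq v₃ v₁ + b₃ * hA.eq v₁ v₂ + b₁ * hA.eq v₂ v₃

end Bracket

/-- For `A` a symmetric bilinear form on a finite-dimensional real
inner product space `V`, the Cahen--Wallach bracket on `V ⊕ V* ⊕ ℝe₊ ⊕ ℝe₋` is
bilinear, antisymmetric and satisfies the Jacobi identity, hence defines a Lie
algebra structure `𝔤_A`. -/
theorem cwBracket_lie_algebra (A : LinearMap.BilinForm ℝ V) (hA : A.IsSymm) :
    (∀ x y z : CW V, cwBracket A (x + y) z = cwBracket A x z + cwBracket A y z) ∧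
    (∀ (r : ℝ) (x y : CW V), cwBracket A (r • x) y = r • cwBracket A x y) ∧
    (∀ x y z : CW V, cwBracket A x (y + z) = cwBracket A x y + cwBracket A x z) ∧
    (∀ (r : ℝ) (x y : CW V), cwBracket A x (r • y) = r • cwBracket A x y) ∧
    (∀ x y : CW V, cwBracket A x y = - cwBracket A y x) ∧
    (∀ x y z : CW V,
      cwBracket A x (cwBracket A y z) + cwBracket A y (cwBracket A z x) +
        cwBracket A z (cwBracket A x y) = 0) :=
  ⟨cwBracket_add_left A, cwBracket_smul_left A, cwBracket_add_right A,
    cwBracket_smul_right A, cwBracket_swap A, cwBracket_jacobi hA⟩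
end
end

section
/- Let V be a finite-dimensional real inner product space, A and A' symmetric bilinear forms on V, and suppose A'(v, w) = c·A(Ov, Ow) for all v, w ∈ V, where O : V → V is an orthogonal transformation and c > 0 is a positive real number. Then the Cahen–Wallach Lie algebras 𝔤_A and 𝔤_{A'} are isomorphic as Lie algebras. -/
open scoped RealInnerProductSpace

noncomputable section

variable {V : Type*} [NormedAddCommGroup V] [InnerProductSpace ℝ V] [FiniteDimensional ℝ V]

/-!
The isomorphism is a composite of two. Since `♯` and `♭` commute with isometries,
`(v, α, a, b) ↦ (O⁻¹ v, α ∘ O, a, b)` carries `𝔤_A` onto `𝔤_B` with `B(v, w) = A(Ov, Ow)`.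
For `s ≠ 0` the rescaling `(v, α, a, b) ↦ (s v, α, s³ a, s⁻¹ b)` carries `𝔤_B` onto `𝔤_{s²B}`;
take `s = √c`.
-/

lemma inner_sharp (α : Module.Dual ℝ V) (w : V) : ⟪sharp α, w⟫ = α w := by
  simp [sharp, InnerProductSpace.toDual_symm_apply]

lemma sharp_dualMap (O : V ≃ₗᵢ[ℝ] V) (α : Module.Dual ℝ V) :
    sharp (O.toLinearEquiv.dualMap α) = O.symm (sharp α) :=
  ext_inner_right ℝ fun w => by
    rw [inner_sharp, ← O.inner_map_map, O.apply_symm_apply, inner_sharp]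
    rfl

lemma flat_symm_apply (O : V ≃ₗᵢ[ℝ] V) (v : V) :
    flat (O.symm v) = O.toLinearEquiv.dualMap (flat v) := by
  ext w
  change ⟪O.symm v, w⟫ = ⟪v, O w⟫
  rw [← O.inner_map_map (O.symm v) w, O.apply_symm_apply]

lemma LinearMap.BilinForm.compl₁₂_symm_apply {R M : Type*} [CommSemiring R] [AddCommMonoid M]
    [Module R M] (A : LinearMap.BilinForm R M) (e : M ≃ₗ[R] M) (v : M) :
    A.compl₁₂ (e : M →ₗ[R] M) (e : M →ₗ[R] M) (e.symm v) = e.dualMap (A v) := by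
  ext w
  simp

def cwOrthogonalEquiv (O : V ≃ₗᵢ[ℝ] V) : CW V ≃ₗ[ℝ] CW V :=
  O.symm.toLinearEquiv.prodCongr
    (O.toLinearEquiv.dualMap.prodCongr (LinearEquiv.refl ℝ (ℝ × ℝ)))

lemma cwOrthogonalEquiv_bracket (A : LinearMap.BilinForm ℝ V) (O : V ≃ₗᵢ[ℝ] V)
    (x y : CW V) :
    cwOrthogonalEquiv O (cwBracket A x y) =
      cwBracket (A.compl₁₂ (O.toLinearEquiv : V →ₗ[ℝ] V) (O.toLinearEquiv : V →ₗ[ℝ] V))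
        (cwOrthogonalEquiv O x) (cwOrthogonalEquiv O y) := by
  obtain ⟨v, α, a, b⟩ := x
  obtain ⟨w, β, a', b'⟩ := y
  have hcompl : ∀ u, A.compl₁₂ (O.toLinearEquiv : V →ₗ[ℝ] V) (O.toLinearEquiv : V →ₗ[ℝ] V)
      (O.symm u) = O.toLinearEquiv.dualMap (A u) :=
    A.compl₁₂_symm_apply O.toLinearEquiv
  simp [cwOrthogonalEquiv, cwBracket, hcompl, sharp_dualMap, flat_symm_apply]

def cwScaleEquiv (s : ℝ) (hs : s ≠ 0) : CW V ≃ₗ[ℝ] CW V :=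
  (LinearEquiv.smulOfNeZero ℝ V s hs).prodCongr ((LinearEquiv.refl ℝ _).prodCongr
    ((LinearEquiv.smulOfNeZero ℝ ℝ (s ^ 3) (pow_ne_zero 3 hs)).prodCongr
      (LinearEquiv.smulOfNeZero ℝ ℝ s⁻¹ (inv_ne_zero hs))))

lemma cwScaleEquiv_bracket (A : LinearMap.BilinForm ℝ V) (s : ℝ) (hs : s ≠ 0) (x y : CW V) :
    cwScaleEquiv s hs (cwBracket A x y) =
      cwBracket (s ^ 2 • A) (cwScaleEquiv s hs x) (cwScaleEquiv s hs y) := by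
  obtain ⟨v, α, a, b⟩ := x
  obtain ⟨w, β, a', b'⟩ := y
  have cancel₂ (t : ℝ) : s⁻¹ * t * s ^ 2 = s * t := by field_simp
  have cancel₁ (t : ℝ) : s⁻¹ * t * s = t := by field_simp
  simp [cwScaleEquiv, cwBracket, sharp_smul, flat_smul, smul_smul, smul_sub, cancel₁, cancel₂]
  ring

theorem cw_isomorphic_general (A A' : LinearMap.BilinForm ℝ V)
    (O : V ≃ₗᵢ[ℝ] V) (c : ℝ) (hc : 0 < c)
    (h : ∀ v w : V, A' v w = c * A (O v) (O w)) :
    ∃ e : CW V ≃ₗ[ℝ] CW V,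
      ∀ x y : CW V, e (cwBracket A x y) = cwBracket A' (e x) (e y) := by
  have hs : √c ≠ 0 := Real.sqrt_ne_zero'.2 hc
  have hA' : A' =
      √c ^ 2 • A.compl₁₂ (O.toLinearEquiv : V →ₗ[ℝ] V) (O.toLinearEquiv : V →ₗ[ℝ] V) := by
    ext v w
    simp [h, Real.sq_sqrt hc.le]
  refine ⟨(cwOrthogonalEquiv O).trans (cwScaleEquiv √c hs), fun x y => ?_⟩
  simp only [hA', LinearEquiv.trans_apply, cwOrthogonalEquiv_bracket, cwScaleEquiv_bracket]

/-- If `A'(v,w) = c·A(Ov, Ow)` for all `v, w ∈ V`, where `O` is an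
orthogonal transformation of `V` and `c > 0`, then the Cahen--Wallach Lie algebras
`𝔤_A` and `𝔤_{A'}` are isomorphic as Lie algebras: there is a linear equivalence of
the underlying vector spaces intertwining the two brackets. -/
theorem cw_isomorphic (A A' : LinearMap.BilinForm ℝ V)
    (hA : A.IsSymm) (hA' : A'.IsSymm)
    (O : V ≃ₗᵢ[ℝ] V) (c : ℝ) (hc : 0 < c)
    (h : ∀ v w : V, A' v w = c * A (O v) (O w)) :
    ∃ e : CW V ≃ₗ[ℝ] CW V,
      ∀ x y : CW V, e (cwBracket A x y) = cwBracket A' (e x) (e y) :=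
  cw_isomorphic_general A A' O c hc h

end
end
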